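/- Let κ ∈ ℝ and a < b be reals. Let u : [a,b] → ℝ satisfy the κ-concavity inequality on [a,b]: for all x, y ∈ [a,b] with 0 < y − x (and additionally (y−x)·√κ < π if κ > 0) and all t ∈ [0,1], u((1−t)x + t y) ≥ (sin_κ((1−t)(y−x))/sin_κ(y−x))·u(x) + (sin_κ(t(y−x))/sin_κ(y−x))·u(y). Then for every twice differentiable function F : (a,b) → ℝ with F''(x) = −κ·u(x) for all x ∈ (a,b), the function u − F is concave on (a,b). -/

import Mathlib

open Real Set

/-- The generalized sine function `sin_κ`. -/
noncomputable def sinK (κ x : ℝ) : ℝ :=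
  if κ < 0 then Real.sinh (Real.sqrt (-κ) * x) / Real.sqrt (-κ)
  else if κ = 0 then x
  else Real.sin (Real.sqrt κ * x) / Real.sqrt κ

/-- `u` satisfies the κ-concavity inequality (`u'' + κ u ≤ 0`) on the set `s`. -/
def KConcIneqOn (κ : ℝ) (u : ℝ → ℝ) (s : Set ℝ) : Prop :=
  ∀ x ∈ s, ∀ y ∈ s, 0 < y - x → (0 < κ → (y - x) * Real.sqrt κ < Real.pi) →
    ∀ t ∈ Set.Icc (0:ℝ) 1,
      u ((1 - t) * x + t * y) ≥
        (sinK κ ((1 - t) * (y - x)) / sinK κ (y - x)) * u x +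
        (sinK κ (t * (y - x)) / sinK κ (y - x)) * u y

/-!
If `g = u - F` were not concave, subtracting from `g` an affine function and a small multiple
`ε w²` would produce a lower semicontinuous function with an interior minimum `p` on some
compact subinterval, so the symmetric second differences of `g` at `p` would eventually be at
least `2 ε h²`. But the κ-concavity inequality at the midpoint of `[p - h, p + h]` says
`u (p - h) + u (p + h) ≤ 2 cos_κ h · u p`, and since `(2 cos_κ h - 2) / h² → -κ` and the second
differences of `F` divided by `h²` tend to `F'' p = -κ u p`, the second differences of `g` at `p`
are `o(h²)` from above. Lower semicontinuity of `u` comes from bounding `u` from below, on both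
sides of each point, by κ-chords, which are continuous.
-/

open Filter Topology Asymptotics

noncomputable def cosK (κ x : ℝ) : ℝ :=
  if κ < 0 then Real.cosh (Real.sqrt (-κ) * x)
  else if κ = 0 then 1
  else Real.cos (Real.sqrt κ * x)

section SinK

variable (κ : ℝ)

lemma sinK_zero : sinK κ 0 = 0 := by
  unfold sinK; split_ifs <;> simp

lemma cosK_zero : cosK κ 0 = 1 := by
  unfold cosK; split_ifs <;> simp

lemma cosK_neg (x : ℝ) : cosK κ (-x) = cosK κ x := by
  unfold cosK; split_ifs <;> simp

lemma sinK_two_mul (x : ℝ) : sinK κ (2 * x) = 2 * sinK κ x * cosK κ x := by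
  unfold sinK cosK
  split_ifs
  · rw [mul_left_comm, Real.sinh_two_mul]; ring
  · ring
  · rw [mul_left_comm, Real.sin_two_mul]; ring

lemma hasDerivAt_sinK (x : ℝ) : HasDerivAt (sinK κ) (cosK κ x) x := by
  show HasDerivAt (fun y => sinK κ y) _ x
  rcases lt_trichotomy κ 0 with hκ | rfl | hκ
  · have hs : Real.sqrt (-κ) ≠ 0 := (Real.sqrt_pos.2 (neg_pos.2 hκ)).ne'
    have h := (((hasDerivAt_id' x).const_mul (Real.sqrt (-κ))).sinh).div_const (Real.sqrt (-κ))
    simp only [sinK, cosK, if_pos hκ]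
    refine h.congr_deriv ?_
    field_simp
  · simpa [sinK, cosK] using hasDerivAt_id' x
  · have hs : Real.sqrt κ ≠ 0 := (Real.sqrt_pos.2 hκ).ne'
    have h := (((hasDerivAt_id' x).const_mul (Real.sqrt κ)).sin).div_const (Real.sqrt κ)
    simp only [sinK, cosK, if_neg hκ.not_gt, if_neg hκ.ne']
    refine h.congr_deriv ?_
    field_simp

lemma hasDerivAt_cosK (x : ℝ) : HasDerivAt (cosK κ) (-κ * sinK κ x) x := by
  show HasDerivAt (fun y => cosK κ y) _ x
  rcases lt_trichotomy κ 0 with hκ | rfl | hκ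
  · have hs : Real.sqrt (-κ) ≠ 0 := (Real.sqrt_pos.2 (neg_pos.2 hκ)).ne'
    have hsq := Real.sq_sqrt (neg_nonneg.2 hκ.le)
    have h := ((hasDerivAt_id' x).const_mul (Real.sqrt (-κ))).cosh
    simp only [sinK, cosK, if_pos hκ]
    refine h.congr_deriv ?_
    field_simp
    rw [hsq]; ring
  · simpa [sinK, cosK] using hasDerivAt_const x (1 : ℝ)
  · have hs : Real.sqrt κ ≠ 0 := (Real.sqrt_pos.2 hκ).ne'
    have hsq := Real.sq_sqrt hκ.le
    have h := ((hasDerivAt_id' x).const_mul (Real.sqrt κ)).cos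
    simp only [sinK, cosK, if_neg hκ.not_gt, if_neg hκ.ne']
    refine h.congr_deriv ?_
    field_simp
    rw [hsq]; ring

@[fun_prop]
lemma continuous_sinK : Continuous (sinK κ) :=
  continuous_iff_continuousAt.2 fun x => (hasDerivAt_sinK κ x).continuousAt

lemma sinK_pos {d : ℝ} (hd : 0 < d) (hπ : 0 < κ → d * Real.sqrt κ < Real.pi) :
    0 < sinK κ d := by
  unfold sinK
  split_ifs with hneg hzero
  · have hs : 0 < Real.sqrt (-κ) := Real.sqrt_pos.2 (neg_pos.2 hneg)
    exact div_pos (Real.sinh_pos_iff.2 (by positivity)) hs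
  · exact hd
  · have hκ : 0 < κ := lt_of_le_of_ne (not_lt.1 hneg) (Ne.symm hzero)
    have hs : 0 < Real.sqrt κ := Real.sqrt_pos.2 hκ
    refine div_pos (Real.sin_pos_of_pos_of_lt_pi (by positivity) ?_) hs
    linarith [hπ hκ]

lemma eventually_mul_sqrt_lt_pi : ∀ᶠ r in 𝓝 (0 : ℝ), r * Real.sqrt κ < Real.pi := by
  have h : Tendsto (fun r : ℝ => r * Real.sqrt κ) (𝓝 0) (𝓝 (0 * Real.sqrt κ)) :=
    (continuous_mul_const _).tendsto 0
  exact h.eventually_lt_const (by simpa using Real.pi_pos)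

end SinK

lemma eventually_add_mem_and_sub_mem {p : ℝ} {U : Set ℝ} (hU : U ∈ 𝓝 p) :
    ∀ᶠ h in 𝓝 (0 : ℝ), p + h ∈ U ∧ p - h ∈ U := by
  have hadd : Tendsto (fun h => p + h) (𝓝 0) (𝓝 p) := by
    simpa using (continuous_const_add p).tendsto 0
  have hsub : Tendsto (fun h => p - h) (𝓝 0) (𝓝 p) := by
    simpa using (continuous_sub_left p).tendsto 0
  exact (hadd.eventually_mem hU).and (hsub.eventually_mem hU)

theorem tendsto_symmSecondDiff {F F' : ℝ → ℝ} {p L : ℝ}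
    (hF : ∀ᶠ w in 𝓝 p, HasDerivAt F (F' w) w) (hF' : HasDerivAt F' L p) :
    Tendsto (fun h => (F (p + h) + F (p - h) - 2 * F p) / h ^ 2) (𝓝[≠] 0) (𝓝 L) := by
  obtain ⟨δ, hδ, hFδ⟩ := Metric.eventually_nhds_iff_ball.1 hF
  have hball : Metric.ball (0 : ℝ) δ ∈ 𝓝 0 := Metric.ball_mem_nhds 0 hδ
  have hderiv : ∀ t ∈ Metric.ball (0 : ℝ) δ,
      HasDerivWithinAt (fun t => F (p + t) + F (p - t) - 2 * F p - L * t ^ 2)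
        (F' (p + t) - F' (p - t) - 2 * L * t) (Metric.ball 0 δ) t := by
    intro t ht
    have ht' : dist (p + t) p < δ ∧ dist (p - t) p < δ := by
      rw [Metric.mem_ball, Real.dist_eq] at ht
      simp only [Real.dist_eq, add_sub_cancel_left, sub_sub_cancel_left, abs_neg]
      simpa using And.intro ht ht
    have h := (((hFδ _ ht'.1).comp_const_add p t).add ((hFδ _ ht'.2).comp_const_sub p t)
      |>.sub_const (2 * F p)).sub ((hasDerivAt_pow 2 t).const_mul L)
    exact (h.congr_deriv (by ring)).hasDerivWithinAt
  have hlittle : (fun t => F' (p + t) - F' (p - t) - 2 * L * t) =o[𝓝 0] fun t => t := by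
    have h := hasDerivAt_iff_isLittleO_nhds_zero.1 hF'
    have hneg := isLittleO_neg_right.1
      (h.comp_tendsto (by simpa using (continuous_neg.tendsto (0 : ℝ))))
    refine (h.sub hneg).congr_left fun t => ?_
    simp only [Function.comp_apply, smul_eq_mul, ← sub_eq_add_neg]
    ring
  have hΦ := (convex_ball (0 : ℝ) δ).isLittleO_pow_succ_real (n := 1)
    (Metric.mem_ball_self hδ) hderiv (by simpa [nhdsWithin_eq_nhds.2 hball] using hlittle)
  rw [nhdsWithin_eq_nhds.2 hball] at hΦ
  have hlim := (hΦ.tendsto_div_nhds_zero.mono_left (nhdsWithin_le_nhds (s := {0}ᶜ))).add_const L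
  rw [zero_add] at hlim
  refine hlim.congr' ?_
  filter_upwards [self_mem_nhdsWithin] with h (hh : h ≠ 0)
  simp only [add_zero, sub_zero]
  field_simp
  ring

theorem concaveOn_of_frequently_symmDiff_lt {g : ℝ → ℝ} {s : Set ℝ} (hs : Convex ℝ s)
    (hg : LowerSemicontinuousOn g s)
    (hD : ∀ p ∈ interior s, ∀ ε > 0,
      ∃ᶠ h in 𝓝[>] 0, g (p + h) + g (p - h) - 2 * g p < ε * h ^ 2) :
    ConcaveOn ℝ s g := by
  refine concaveOn_of_slope_anti_adjacent hs fun {x y z} hx hz hxy hyz => ?_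
  by_contra! hslope
  obtain ⟨m, hxm, hmz⟩ := exists_between hslope
  have hyx : g y - m * y < g x - m * x := by
    linarith [(div_lt_iff₀ (sub_pos.2 hxy)).1 hxm]
  have hyz' : g y - m * y < g z - m * z := by
    linarith [(lt_div_iff₀ (sub_pos.2 hyz)).1 hmz]
  -- `g w - m w` is smaller at `y` than at `x` and `z`; subtracting `ε w²` keeps this, and forces
  -- the second differences at the resulting interior minimum to be at least `2 ε h²`.
  obtain ⟨ε, ⟨hεx, hεz⟩, hε⟩ : ∃ ε,
      (g y - m * y - ε * y ^ 2 < g x - m * x - ε * x ^ 2 ∧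
        g y - m * y - ε * y ^ 2 < g z - m * z - ε * z ^ 2) ∧ 0 < ε := by
    have hx0 := ContinuousAt.eventually_lt (f := fun ε => g y - m * y - ε * y ^ 2)
      (g := fun ε => g x - m * x - ε * x ^ 2) (x₀ := 0) (by fun_prop) (by fun_prop)
      (by simpa using hyx)
    have hz0 := ContinuousAt.eventually_lt (f := fun ε => g y - m * y - ε * y ^ 2)
      (g := fun ε => g z - m * z - ε * z ^ 2) (x₀ := 0) (by fun_prop) (by fun_prop)
      (by simpa using hyz')
    exact (((hx0.and hz0).filter_mono nhdsWithin_le_nhds).and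
      (self_mem_nhdsWithin (s := Ioi 0))).exists
  have hsub : Icc x z ⊆ s := hs.ordConnected.out hx hz
  have hψ : LowerSemicontinuousOn (fun w => g w - m * w - ε * w ^ 2) (Icc x z) := by
    have hq : Continuous fun w : ℝ => -(m * w + ε * w ^ 2) := by fun_prop
    simpa only [sub_sub, ← sub_eq_add_neg] using
      (hg.mono hsub).add (hq.lowerSemicontinuous.lowerSemicontinuousOn _)
  obtain ⟨p, hp, hmin⟩ := hψ.exists_isMinOn (nonempty_Icc.2 (hxy.trans hyz).le) isCompact_Icc
  have hpy := hmin ⟨hxy.le, hyz.le⟩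
  have hpx : x < p := lt_of_le_of_ne hp.1 fun h => by
    subst h; exact (hpy.trans_lt hεx).false
  have hpz : p < z := lt_of_le_of_ne hp.2 fun h => by
    subst h; exact (hpy.trans_lt hεz).false
  have hpint : p ∈ interior s := interior_mono hsub (by rw [interior_Icc]; exact ⟨hpx, hpz⟩)
  have hge : ∀ᶠ h in 𝓝 0, 2 * ε * h ^ 2 ≤ g (p + h) + g (p - h) - 2 * g p := by
    filter_upwards [eventually_add_mem_and_sub_mem (Icc_mem_nhds hpx hpz)] with h ⟨hr, hl⟩
    have h₁ := isMinOn_iff.1 hmin _ hr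
    have h₂ := isMinOn_iff.1 hmin _ hl
    linarith
  obtain ⟨h, hlt, hle, hh⟩ := ((hD p hpint ε hε).and_eventually
    ((hge.filter_mono nhdsWithin_le_nhds).and self_mem_nhdsWithin)).exists
  have : 0 < ε * h ^ 2 := mul_pos hε (pow_pos hh 2)
  linarith

/-- The solution of `v'' + κ v = 0` with `v x = u x` and `v y = u y`, evaluated at `w`. -/
noncomputable def kChord (κ : ℝ) (u : ℝ → ℝ) (x y w : ℝ) : ℝ :=
  (sinK κ (y - w) * u x + sinK κ (w - x) * u y) / sinK κ (y - x)

section KConcIneqOn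

variable {κ : ℝ} {u : ℝ → ℝ} {s : Set ℝ} {x y : ℝ}

@[fun_prop]
lemma continuous_kChord : Continuous (kChord κ u x y) := by
  unfold kChord; fun_prop

lemma kChord_left (h : sinK κ (y - x) ≠ 0) : kChord κ u x y x = u x := by
  simp [kChord, sinK_zero, h]

lemma kChord_right (h : sinK κ (y - x) ≠ 0) : kChord κ u x y y = u y := by
  simp [kChord, sinK_zero, h]

lemma KConcIneqOn.kChord_le (hu : KConcIneqOn κ u s) (hx : x ∈ s) (hy : y ∈ s) (hxy : x < y)
    (hπ : 0 < κ → (y - x) * Real.sqrt κ < Real.pi) {w : ℝ} (hw : w ∈ Icc x y) :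
    kChord κ u x y w ≤ u w := by
  have hd : 0 < y - x := sub_pos.2 hxy
  set t := (w - x) / (y - x)
  have ht : t * (y - x) = w - x := div_mul_cancel₀ _ hd.ne'
  have key := hu x hx y hy hd hπ t
    ⟨div_nonneg (sub_nonneg.2 hw.1) hd.le, (div_le_one hd).2 (by linarith [hw.2])⟩
  rw [show (1 - t) * x + t * y = w by linear_combination ht,
    show (1 - t) * (y - x) = y - w by linear_combination -ht, ht] at key
  rw [kChord, add_div, mul_div_right_comm, mul_div_right_comm]
  exact key

lemma KConcIneqOn.lowerSemicontinuousAt (hu : KConcIneqOn κ u s) {p : ℝ} (hs : s ∈ 𝓝 p) :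
    LowerSemicontinuousAt u p := by
  obtain ⟨r, ⟨hsub, hπ⟩, hr⟩ := (((eventually_closedBall_subset hs).and
    (eventually_mul_sqrt_lt_pi κ)).filter_mono nhdsWithin_le_nhds |>.and
    (self_mem_nhdsWithin (s := Ioi 0))).exists
  rw [Real.closedBall_eq_Icc] at hsub
  have hr : (0 : ℝ) < r := hr
  have hsin : sinK κ r ≠ 0 := (sinK_pos κ hr fun _ => hπ).ne'
  intro c hc
  have hright : ∀ᶠ w in 𝓝 p, c < kChord κ u p (p + r) w :=
    (continuous_kChord.tendsto p).eventually_const_lt (hc.trans_eq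
      (kChord_left (by rwa [add_sub_cancel_left])).symm)
  have hleft : ∀ᶠ w in 𝓝 p, c < kChord κ u (p - r) p w :=
    (continuous_kChord.tendsto p).eventually_const_lt (hc.trans_eq
      (kChord_right (by rwa [sub_sub_cancel])).symm)
  filter_upwards [hright, hleft, Icc_mem_nhds (sub_lt_self p hr) (lt_add_of_pos_right p hr)]
    with w hcR hcL hw
  rcases le_total p w with hpw | hwp
  · refine hcR.trans_le (hu.kChord_le (hsub ⟨by linarith, by linarith⟩) (hsub ⟨by linarith,
      le_rfl⟩) (by linarith) (fun _ => by rwa [add_sub_cancel_left]) ⟨hpw, hw.2⟩)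
  · refine hcL.trans_le (hu.kChord_le (hsub ⟨le_rfl, by linarith⟩) (hsub ⟨by linarith,
      by linarith⟩) (by linarith) (fun _ => by rwa [sub_sub_cancel]) ⟨hw.1, hwp⟩)

lemma KConcIneqOn.add_sub_le_two_mul_cosK (hu : KConcIneqOn κ u s) {p h : ℝ} (hl : p - h ∈ s)
    (hr : p + h ∈ s) (hh : 0 < h) (hπ : 2 * h * Real.sqrt κ < Real.pi) :
    u (p - h) + u (p + h) ≤ 2 * cosK κ h * u p := by
  have hd : p + h - (p - h) = 2 * h := by ring
  have hsin : 0 < sinK κ h := sinK_pos κ hh fun _ => by nlinarith [Real.sqrt_nonneg κ]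
  have hsin2 : 0 < sinK κ (2 * h) := sinK_pos κ (by positivity) fun _ => hπ
  have key := hu.kChord_le (w := p) hl hr (by linarith) (fun _ => hd ▸ hπ)
    ⟨by linarith, by linarith⟩
  rw [kChord, hd, show p + h - p = h by ring, show p - (p - h) = h by ring,
    div_le_iff₀ hsin2, sinK_two_mul] at key
  refine le_of_mul_le_mul_left ?_ hsin
  linear_combination key

end KConcIneqOn

lemma KConcIneqOn.frequently_symmDiff_sub_lt {κ : ℝ} {u F F' : ℝ → ℝ} {s : Set ℝ} {p ε : ℝ}
    (hu : KConcIneqOn κ u s) (hs : s ∈ 𝓝 p) (hF : ∀ᶠ w in 𝓝 p, HasDerivAt F (F' w) w)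
    (hF' : HasDerivAt F' (-κ * u p) p) (hε : 0 < ε) :
    ∃ᶠ h in 𝓝[>] 0,
      (u (p + h) - F (p + h)) + (u (p - h) - F (p - h)) - 2 * (u p - F p) < ε * h ^ 2 := by
  by_contra! hge
  have hpos : 𝓝[>] (0 : ℝ) ≤ 𝓝[≠] 0 := nhdsWithin_mono _ fun _ hh => ne_of_gt hh
  -- `(2 cos_κ h - 2) / h² → -κ`, read as the second difference of `cos_κ` at `0`
  have hcos := (tendsto_symmSecondDiff (.of_forall (hasDerivAt_cosK κ))
    ((hasDerivAt_sinK κ 0).const_mul (-κ))).mono_left hpos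
  have hlim := (hcos.mul_const (u p)).sub ((tendsto_symmSecondDiff hF hF').mono_left hpos)
  rw [cosK_zero, mul_one] at hlim
  have h2π : ∀ᶠ h in 𝓝 (0 : ℝ), 2 * h * Real.sqrt κ < Real.pi :=
    ((continuous_const_mul 2).tendsto' 0 0 (mul_zero 2)).eventually (eventually_mul_sqrt_lt_pi κ)
  have hbound : ∀ᶠ h in 𝓝[>] 0, ε ≤ (cosK κ (0 + h) + cosK κ (0 - h) - 2) / h ^ 2 * u p
      - (F (p + h) + F (p - h) - 2 * F p) / h ^ 2 := by
    filter_upwards [hge, ((eventually_add_mem_and_sub_mem hs).and h2π).filter_mono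
      nhdsWithin_le_nhds, self_mem_nhdsWithin] with h hεh ⟨⟨hr, hl⟩, hπ⟩ (hh : 0 < h)
    have hmid := hu.add_sub_le_two_mul_cosK hl hr hh hπ
    rw [zero_add, zero_sub, cosK_neg, div_mul_eq_mul_div, ← sub_div,
      le_div_iff₀ (by positivity)]
    linarith
  linarith [ge_of_tendsto hlim hbound]

theorem concave_sub_of_kConcIneq_general (κ a b : ℝ) (u : ℝ → ℝ)
    (hu : KConcIneqOn κ u (Set.Icc a b)) (F F' : ℝ → ℝ)
    (hF : ∀ x ∈ Set.Ioo a b, HasDerivAt F (F' x) x)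
    (hF' : ∀ x ∈ Set.Ioo a b, HasDerivAt F' (-κ * u x) x) :
    ConcaveOn ℝ (Set.Ioo a b) (fun x => u x - F x) := by
  refine concaveOn_of_frequently_symmDiff_lt (convex_Ioo a b) (fun p hp => ?_)
    fun p hp ε hε => ?_
  · have hu' := hu.lowerSemicontinuousAt (Icc_mem_nhds hp.1 hp.2)
    have hFc : ContinuousAt (fun x => -F x) p := (hF p hp).continuousAt.neg
    simpa only [sub_eq_add_neg] using
      (hu'.add hFc.lowerSemicontinuousAt).lowerSemicontinuousWithinAt _
  · rw [interior_Ioo] at hp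
    exact hu.frequently_symmDiff_sub_lt (Icc_mem_nhds hp.1 hp.2)
      (eventually_of_mem (Ioo_mem_nhds hp.1 hp.2) hF) (hF' p hp) hε

/-- If `u` satisfies the κ-concavity inequality on `[a,b]`, then for every twice
differentiable `F` on `(a,b)` with `F'' = -κ u`, the function `u - F` is concave
on `(a,b)`. -/
theorem concave_sub_of_kConcIneq (κ a b : ℝ) (hab : a < b) (u : ℝ → ℝ)
    (hu : KConcIneqOn κ u (Set.Icc a b)) (F F' : ℝ → ℝ)
    (hF : ∀ x ∈ Set.Ioo a b, HasDerivAt F (F' x) x)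
    (hF' : ∀ x ∈ Set.Ioo a b, HasDerivAt F' (-κ * u x) x) :
    ConcaveOn ℝ (Set.Ioo a b) (fun x => u x - F x) :=
  concave_sub_of_kConcIneq_general κ a b u hu F F' hF hF'
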